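/- arXiv:2203.07530 — 3 statements merged into one kernel-verified Lean document; each statement's English description precedes it below -/
import Mathlib

section
/- If Z : [0,T] → ℝ is twice continuously differentiable with Z(t) ≥ ε > 0, F_Z = Z'/Z, and the measured acceleration satisfies a(t) = −Z''(t) + g for a constant g, then with E_Z(t) = exp(∫₀ᵗ F_Z) − 1 − t F_Z(0), Δ{a}(t) = ∫₀ᵗ∫₀^λ a(μ)dμdλ, and Δ{1}(t) = t²/2, the pair (Z(0), g) satisfies E_Z(t)·Z(0) + Δ{a}(t) − (t²/2)·g = 0 for all t ∈ [0,T]; i.e., the residual in the least-squares problem of equation (11) vanishes identically at the true depth and gravity. -/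
/-!
Since `Z' / Z` is the logarithmic derivative of `Z > 0`, the exponential term is `Z t / Z 0`, so
`E_Z(t) · Z(0) = Z(t) - Z(0) - t Z'(0)`. On the other hand `a = h''` for
`h(s) = -Z(s) + g s² / 2`, and integrating twice from `0` gives
`Δ{a}(t) = h(t) - h(0) - t h'(0) = -(Z(t) - Z(0) - t Z'(0)) + g t² / 2`. The three terms cancel.
-/

open Set intervalIntegral

theorem exp_integral_div_eq_div {f f' : ℝ → ℝ} {a b : ℝ}
    (hf : ∀ x ∈ uIcc a b, HasDerivAt f (f' x) x) (hf' : ContinuousOn f' (uIcc a b))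
    (hpos : ∀ x ∈ uIcc a b, 0 < f x) :
    Real.exp (∫ x in a..b, f' x / f x) = f b / f a := by
  have hcont : ContinuousOn f (uIcc a b) := fun x hx => (hf x hx).continuousAt.continuousWithinAt
  have hlog : ∫ x in a..b, f' x / f x = Real.log (f b) - Real.log (f a) :=
    integral_eq_sub_of_hasDerivAt (fun x hx => (hf x hx).log (hpos x hx).ne')
      ((hf'.div hcont fun x hx => (hpos x hx).ne').intervalIntegrable)
  rw [hlog, Real.exp_sub, Real.exp_log (hpos b right_mem_uIcc),
    Real.exp_log (hpos a left_mem_uIcc)]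

theorem integral_integral_eq_of_hasDerivAt {f f' f'' : ℝ → ℝ} {a b : ℝ}
    (hf : ∀ x ∈ uIcc a b, HasDerivAt f (f' x) x) (hf' : ∀ x ∈ uIcc a b, HasDerivAt f' (f'' x) x)
    (hf'' : ContinuousOn f'' (uIcc a b)) :
    ∫ x in a..b, ∫ y in a..x, f'' y = f b - f a - (b - a) * f' a := by
  have hinner : ∀ x ∈ uIcc a b, ∫ y in a..x, f'' y = f' x - f' a := fun x hx =>
    integral_eq_sub_of_hasDerivAt (fun y hy => hf' y (uIcc_subset_uIcc_left hx hy))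
      ((hf''.mono (uIcc_subset_uIcc_left hx)).intervalIntegrable)
  have hf'_cont : ContinuousOn f' (uIcc a b) := fun x hx =>
    (hf' x hx).continuousAt.continuousWithinAt
  calc ∫ x in a..b, ∫ y in a..x, f'' y
      = ∫ x in a..b, (f' x - f' a) := integral_congr hinner
    _ = (f b - f a) - (b - a) * f' a := by
      rw [integral_sub (hf'_cont.intervalIntegrable) intervalIntegrable_const,
        integral_eq_sub_of_hasDerivAt hf hf'_cont.intervalIntegrable, integral_const, smul_eq_mul]

/-- the residual of the least-squares problem vanishes identically at the
true depth `Z 0` and gravity `g` when the measured acceleration is `a = -Z'' + g`. -/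
theorem tau_stmt4 (T ε : ℝ) (hε : 0 < ε) (Z Z' Z'' a : ℝ → ℝ) (g : ℝ)
    (hderiv : ∀ t ∈ Set.Icc (0:ℝ) T, HasDerivAt Z (Z' t) t)
    (hderiv' : ∀ t ∈ Set.Icc (0:ℝ) T, HasDerivAt Z' (Z'' t) t)
    (hcont : ContinuousOn Z'' (Set.Icc (0:ℝ) T))
    (hZ : ∀ t ∈ Set.Icc (0:ℝ) T, ε ≤ Z t)
    (ha : ∀ t ∈ Set.Icc (0:ℝ) T, a t = -Z'' t + g) :
    ∀ t ∈ Set.Icc (0:ℝ) T,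
      (Real.exp (∫ l in (0:ℝ)..t, Z' l / Z l) - 1 - t * (Z' 0 / Z 0)) * Z 0
        + (∫ l in (0:ℝ)..t, ∫ m in (0:ℝ)..l, a m) - (t ^ 2 / 2) * g = 0 := by
  intro t ht
  have h0 : (0 : ℝ) ∈ Icc 0 T := ⟨le_rfl, ht.1.trans ht.2⟩
  have hsub : uIcc 0 t ⊆ Icc 0 T := uIcc_subset_Icc h0 ht
  have hpos : ∀ s ∈ Icc 0 T, 0 < Z s := fun s hs => hε.trans_le (hZ s hs)
  have hexp : Real.exp (∫ l in (0:ℝ)..t, Z' l / Z l) = Z t / Z 0 :=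
    exp_integral_div_eq_div (fun s hs => hderiv s (hsub hs))
      (fun s hs => (hderiv' s (hsub hs)).continuousAt.continuousWithinAt)
      (fun s hs => hpos s (hsub hs))
  have ha_cont : ContinuousOn a (uIcc 0 t) :=
    ((hcont.mono hsub).neg.add continuousOn_const).congr fun s hs => ha s (hsub hs)
  have hΔa : ∫ l in (0:ℝ)..t, ∫ m in (0:ℝ)..l, a m
      = (-Z t + g * t ^ 2 / 2) - (-Z 0 + g * 0 ^ 2 / 2) - (t - 0) * (-Z' 0 + g * 0) := by
    refine integral_integral_eq_of_hasDerivAt (f := fun s => -Z s + g * s ^ 2 / 2)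
      (f' := fun s => -Z' s + g * s)
      (fun s hs => ?_) (fun s hs => ?_) ha_cont
    · exact ((hderiv s (hsub hs)).neg.add
        (((hasDerivAt_pow 2 s).const_mul g).div_const 2)).congr_deriv (by ring)
    · rw [ha s (hsub hs)]
      exact ((hderiv' s (hsub hs)).neg.add ((hasDerivAt_id s).const_mul g)).congr_deriv
        (by ring)
  rw [hexp, hΔa]
  field_simp [(hpos 0 h0).ne']
  ring
end

section
/- Let Z : [0,T] → ℝ be twice continuously differentiable with Z(t) ≥ ε > 0, Z''(t) = c a nonzero constant, and Z'(0) = 0. Then E_Z(t) = exp(∫₀ᵗ Z'/Z) − 1 − t·(Z'(0)/Z(0)) is proportional to t²/2: specifically E_Z(t) = (c/Z(0))·(t²/2), so the functions E_Z and t ↦ t²/2 are linearly dependent on [0,T]. -/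
/-- under constant acceleration `Z'' = c ≠ 0` and zero initial velocity,
the action's effect `E_Z` is the scalar multiple `(c / Z 0)` of `t² / 2`. -/
theorem tau_stmt6 (T ε c : ℝ) (hε : 0 < ε) (hc : c ≠ 0) (Z Z' : ℝ → ℝ)
    (hderiv : ∀ t ∈ Set.Icc (0:ℝ) T, HasDerivAt Z (Z' t) t)
    (hderiv' : ∀ t ∈ Set.Icc (0:ℝ) T, HasDerivAt Z' c t)
    (hZ : ∀ t ∈ Set.Icc (0:ℝ) T, ε ≤ Z t)
    (hv0 : Z' 0 = 0) :
    ∀ t ∈ Set.Icc (0:ℝ) T,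
      Real.exp (∫ l in (0:ℝ)..t, Z' l / Z l) - 1 - t * (Z' 0 / Z 0)
        = (c / Z 0) * (t ^ 2 / 2) := by
  intro t ht
  obtain ⟨ht0, htT⟩ := ht
  have h0T : (0:ℝ) ∈ Set.Icc (0:ℝ) T := ⟨le_refl _, le_trans ht0 htT⟩
  have hZpos : ∀ s ∈ Set.Icc (0:ℝ) T, 0 < Z s := fun s hs => lt_of_lt_of_le hε (hZ s hs)
  have hsub : Set.uIcc (0:ℝ) t ⊆ Set.Icc (0:ℝ) T := by
    rw [Set.uIcc_of_le ht0]
    exact Set.Icc_subset_Icc le_rfl htT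
  -- Z' s = c * s on Icc 0 T
  have hZ' : ∀ s ∈ Set.Icc (0:ℝ) T, Z' s = c * s := by
    intro s hs
    have hsub' : Set.uIcc (0:ℝ) s ⊆ Set.Icc (0:ℝ) T := by
      rw [Set.uIcc_of_le hs.1]
      exact Set.Icc_subset_Icc le_rfl hs.2
    have := intervalIntegral.integral_eq_sub_of_hasDerivAt
      (f := Z') (f' := fun _ => c) (a := 0) (b := s)
      (fun x hx => hderiv' x (hsub' hx)) (intervalIntegrable_const)
    simp [hv0] at this
    simpa [mul_comm] using this.symm
  -- continuity of Z' on Icc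
  have hcontZ' : ContinuousOn Z' (Set.Icc (0:ℝ) T) :=
    fun s hs => ((hderiv' s hs).continuousAt).continuousWithinAt
  have hcontZ : ContinuousOn Z (Set.Icc (0:ℝ) T) :=
    fun s hs => ((hderiv s hs).continuousAt).continuousWithinAt
  -- Z t = Z 0 + c * t^2 / 2
  have hZt : Z t = Z 0 + c * (t ^ 2 / 2) := by
    have hint : IntervalIntegrable Z' MeasureTheory.volume 0 t :=
      (hcontZ'.mono hsub).intervalIntegrable
    have h1 := intervalIntegral.integral_eq_sub_of_hasDerivAt
      (f := Z) (f' := Z') (a := 0) (b := t)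
      (fun x hx => hderiv x (hsub hx)) hint
    have h2 : (∫ l in (0:ℝ)..t, Z' l) = ∫ l in (0:ℝ)..t, c * l := by
      apply intervalIntegral.integral_congr
      intro x hx
      exact hZ' x (hsub hx)
    have h3 : (∫ l in (0:ℝ)..t, c * l) = c * (t ^ 2 / 2) := by
      rw [intervalIntegral.integral_const_mul, integral_id]
      ring
    rw [h2, h3] at h1
    linarith
  -- integral of Z'/Z = log (Z t) - log (Z 0)
  have hlog : (∫ l in (0:ℝ)..t, Z' l / Z l) = Real.log (Z t) - Real.log (Z 0) := by
    apply intervalIntegral.integral_eq_sub_of_hasDerivAt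
    · intro x hx
      exact (hderiv x (hsub hx)).log (ne_of_gt (hZpos x (hsub hx)))
    · apply ContinuousOn.intervalIntegrable
      apply ContinuousOn.div (hcontZ'.mono hsub) (hcontZ.mono hsub)
      intro x hx
      exact ne_of_gt (hZpos x (hsub hx))
  have hZ0 : 0 < Z 0 := hZpos 0 h0T
  have hZtpos : 0 < Z t := hZpos t ⟨ht0, htT⟩
  rw [hlog, Real.exp_sub, Real.exp_log hZtpos, Real.exp_log hZ0, hZt, hv0]
  field_simp
  ring
end

section
/- Suppose the optical flow at homogeneous image coordinates x = (x, y, 1)ᵀ is given by u = Ẋ n^T x − Ż n_z x (dropping quadratic terms), where Ẋ = (Ẋ, Ẏ, Ż)ᵀ ∈ ℝ³ and n = (n_x, n_y, n_z)ᵀ ∈ ℝ³, i.e., u = A x with A the 3×3 matrix whose upper 2×3 block is [[Ẋn_x − Żn_z, Ẋn_y, Ẋn_z],[Ẏn_x, Ẏn_y − Żn_z, Ẏn_z]] and whose last row is zero. If all entries a₃ = Ẋn_z and a₆ = Ẏn_z are nonzero, then the vector Ẋ/Z_x at an image point x (with 1/Z_x = n^T x) can be recovered from A by the formula Ẋ/Z_x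 = M x, where M = [[a₄a₃/a₆, a₂, a₃],[a₄, a₂a₆/a₃, a₆],[η a₄/a₆, η a₂/a₃, η]] with η = a₄a₃/a₆ − a₁, using the labeling a₁..a₆ of the upper 2×3 block of A. -/
/-- recovery of the frequency-of-contact vector `Ẋ/Z_x` from the affine
flow parameters `a₁,…,a₆`, where `1/Z_x = n_x x + n_y y + n_z`. -/
theorem tau_stmt9 (Xd Yd Zd nx ny nz x y : ℝ)
    (a₁ a₂ a₃ a₄ a₅ a₆ η : ℝ)
    (h₁ : a₁ = Xd * nx - Zd * nz) (h₂ : a₂ = Xd * ny) (h₃ : a₃ = Xd * nz)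
    (h₄ : a₄ = Yd * nx) (h₅ : a₅ = Yd * ny - Zd * nz) (h₆ : a₆ = Yd * nz)
    (hη : η = a₄ * a₃ / a₆ - a₁)
    (ha₃ : a₃ ≠ 0) (ha₆ : a₆ ≠ 0) :
    Xd * (nx * x + ny * y + nz) = (a₄ * a₃ / a₆) * x + a₂ * y + a₃ ∧
    Yd * (nx * x + ny * y + nz) = a₄ * x + (a₂ * a₆ / a₃) * y + a₆ ∧
    Zd * (nx * x + ny * y + nz) = η * (a₄ / a₆) * x + η * (a₂ / a₃) * y + η := by
  have hXd : Xd ≠ 0 := fun h => ha₃ (by simp [h₃, h])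
  have hYd : Yd ≠ 0 := fun h => ha₆ (by simp [h₆, h])
  have hnz : nz ≠ 0 := fun h => ha₃ (by simp [h₃, h])
  have e1 : a₄ * a₃ / a₆ = Xd * nx := by
    rw [h₃, h₄, h₆]; field_simp
  have e2 : a₂ * a₆ / a₃ = Yd * ny := by
    rw [h₂, h₃, h₆]; field_simp
  have eη : η = Zd * nz := by rw [hη, e1, h₁]; ring
  have e3 : a₄ / a₆ = nx / nz := by rw [h₄, h₆]; field_simp
  have e4 : a₂ / a₃ = ny / nz := by rw [h₂, h₃]; field_simp
  refine ⟨by rw [e1, h₂, h₃]; ring, by rw [e2, h₄, h₆]; ring, ?_⟩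
  rw [eη, e3, e4]; field_simp
end
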